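/- Let c₁, …, c_K ∈ ℝ and define ζ(m,n) = c₁ ζ₁(m) + Σ_{k=2}^K c_k ζ_k(m,n) with ζ₁ and ζ_k as in the symmetric binary pseudomarginal family. If ζ is concave on a neighborhood (within its domain) of the segment {(0,n) : 0 ≤ n < 1}, then Σ_{k=1}^K c_k ≥ 0. -/

import Mathlib

open scoped Classical

noncomputable section

/-- `η(t) = t log t`. -/
def eta (t : ℝ) : ℝ := t * Real.log t

/-- `ζ₁(m) = −η((1+m)/2) − η((1−m)/2)`. -/
def zeta1 (m : ℝ) : ℝ := -eta ((1 + m) / 2) - eta ((1 - m) / 2)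

/-- The entropy `ζ_k(m,n)` of the symmetric binary pseudomarginal family for a factor of
size `k`. -/
def zetak (k : ℕ) (m n : ℝ) : ℝ :=
  -eta ((1 + (2 : ℝ) ^ (k - 1) * m + ((2 : ℝ) ^ (k - 1) - 1) * n) / 2 ^ k)
    - eta ((1 - (2 : ℝ) ^ (k - 1) * m + ((2 : ℝ) ^ (k - 1) - 1) * n) / 2 ^ k)
    - ((2 : ℝ) ^ k - 2) * eta ((1 - n) / 2 ^ k)

/-! On the line through `(0, n)` the concave function `ζ(·, n)` has a nonpositive symmetric second
difference at `m = 0`. Since `ζ_k(m, n)` contains `η` at `X_k(n) ± m/2`, this second difference at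
`m = 2d` is `-2 Σ c_k (η(X_k + d) + η(X_k - d) - 2η(X_k))`; dividing by `d²` and letting `d → 0`
gives `Σ c_k / X_k(n) ≥ 0`, as `η'' = 1/t`. All `X_k(n)` tend to `1/2` as `n → 1`, so
`2 Σ c_k ≥ 0`. -/

open Filter Topology Finset

/-- The arguments of the first two `η`-terms of `ζ_k(m, n)` are `X_k(n) ± m / 2`. -/
def zetaCenter (k : ℕ) (n : ℝ) : ℝ := (1 + ((2 : ℝ) ^ (k - 1) - 1) * n) / 2 ^ k

def etaSecondDiff (x d : ℝ) : ℝ := eta (x + d) + eta (x - d) - 2 * eta x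

def zeta (K : ℕ) (c : ℕ → ℝ) (p : ℝ × ℝ) : ℝ :=
  c 1 * zeta1 p.1 + ∑ k ∈ Icc 2 K, c k * zetak k p.1 p.2

theorem ConcaveOn.add_le_two_mul_midpoint {E : Type*} [AddCommGroup E] [Module ℝ E]
    {s : Set E} {f : E → ℝ} (hf : ConcaveOn ℝ s f) {x y : E} (hx : x ∈ s) (hy : y ∈ s) :
    f x + f y ≤ 2 * f (midpoint ℝ x y) := by
  have h := hf.2 hx hy (by norm_num : (0 : ℝ) ≤ 2⁻¹) (by norm_num : (0 : ℝ) ≤ 2⁻¹)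
    (by norm_num)
  rw [midpoint_eq_smul_add, invOf_eq_inv, smul_add]
  simp only [smul_eq_mul] at h
  linarith

/-- Obtained from `1 - 1/y ≤ log y ≤ y - 1` after writing
`etaSecondDiff x d = x log ((x² - d²)/x²) + d log ((x + d)/(x - d))`. -/
theorem etaSecondDiff_div_sq_mem_Icc {x d : ℝ} (hd : 0 < d) (hdx : d < x) :
    etaSecondDiff x d / d ^ 2 ∈
      Set.Icc ((x - 2 * d) / (x ^ 2 - d ^ 2)) ((x + d) / (x * (x - d))) := by
  have hx : 0 < x := hd.trans hdx
  have hxd : 0 < x - d := by linarith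
  have hq₁ : 0 < (x + d) * (x - d) / x ^ 2 := by positivity
  have hq₂ : 0 < (x + d) / (x - d) := by positivity
  have hE : etaSecondDiff x d
      = x * Real.log ((x + d) * (x - d) / x ^ 2) + d * Real.log ((x + d) / (x - d)) := by
    rw [Real.log_div (by positivity) (by positivity), Real.log_mul (by positivity) hxd.ne',
      Real.log_div (by positivity) hxd.ne', Real.log_pow, etaSecondDiff, eta, eta, eta]
    push_cast
    ring
  have hd2 : 0 < d ^ 2 := by positivity
  rw [Set.mem_Icc, le_div_iff₀ hd2, div_le_iff₀ hd2, hE]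
  constructor
  · calc (x - 2 * d) / (x ^ 2 - d ^ 2) * d ^ 2
          = x * (1 - ((x + d) * (x - d) / x ^ 2)⁻¹) + d * (1 - ((x + d) / (x - d))⁻¹) := by
            have : 0 < x ^ 2 - d ^ 2 := by nlinarith
            field_simp
            ring
      _ ≤ _ := by
            gcongr
            · exact Real.one_sub_inv_le_log_of_pos hq₁
            · exact Real.one_sub_inv_le_log_of_pos hq₂
  · calc _ ≤ x * ((x + d) * (x - d) / x ^ 2 - 1) + d * ((x + d) / (x - d) - 1) := by
            gcongr
            · exact Real.log_le_sub_one_of_pos hq₁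
            · exact Real.log_le_sub_one_of_pos hq₂
      _ = (x + d) / (x * (x - d)) * d ^ 2 := by
            field_simp
            ring

theorem tendsto_etaSecondDiff_div_sq {x : ℝ} (hx : 0 < x) :
    Tendsto (fun d => etaSecondDiff x d / d ^ 2) (𝓝[>] 0) (𝓝 x⁻¹) := by
  have hlower : Tendsto (fun d : ℝ => (x - 2 * d) / (x ^ 2 - d ^ 2)) (𝓝[>] 0) (𝓝 x⁻¹) := by
    have h : ContinuousAt (fun d : ℝ => (x - 2 * d) / (x ^ 2 - d ^ 2)) 0 :=
      ContinuousAt.div (by fun_prop) (by fun_prop) (by simp [hx.ne'])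
    simpa [sq, mul_inv] using h.tendsto.mono_left nhdsWithin_le_nhds
  have hupper : Tendsto (fun d : ℝ => (x + d) / (x * (x - d))) (𝓝[>] 0) (𝓝 x⁻¹) := by
    have h : ContinuousAt (fun d : ℝ => (x + d) / (x * (x - d))) 0 :=
      ContinuousAt.div (by fun_prop) (by fun_prop) (by simp [hx.ne'])
    simpa [hx.ne'] using h.tendsto.mono_left nhdsWithin_le_nhds
  have hsmall : ∀ᶠ d in 𝓝[>] (0 : ℝ), d ∈ Set.Ioo 0 x := Ioo_mem_nhdsGT hx
  exact tendsto_of_tendsto_of_tendsto_of_le_of_le' hlower hupper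
    (hsmall.mono fun d hd => (etaSecondDiff_div_sq_mem_Icc hd.1 hd.2).1)
    (hsmall.mono fun d hd => (etaSecondDiff_div_sq_mem_Icc hd.1 hd.2).2)

theorem zetaCenter_pos (k : ℕ) {n : ℝ} (hn : 0 ≤ n) : 0 < zetaCenter k n := by
  have : (1 : ℝ) ≤ 2 ^ (k - 1) := one_le_pow₀ (by norm_num)
  unfold zetaCenter
  positivity

theorem zetaCenter_one {k : ℕ} (hk : 1 ≤ k) : zetaCenter k 1 = 1 / 2 := by
  obtain ⟨j, rfl⟩ := Nat.exists_eq_add_of_le' hk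
  simp only [zetaCenter, Nat.add_sub_cancel, pow_succ]
  field_simp
  ring

theorem zetak_eq {k : ℕ} (hk : 1 ≤ k) (m n : ℝ) :
    zetak k m n = -eta (zetaCenter k n + m / 2) - eta (zetaCenter k n - m / 2)
      - ((2 : ℝ) ^ k - 2) * eta ((1 - n) / 2 ^ k) := by
  obtain ⟨j, rfl⟩ := Nat.exists_eq_add_of_le' hk
  simp only [zetak, zetaCenter, Nat.add_sub_cancel]
  congr 4 <;> rw [pow_succ] <;> field_simp <;> ring

theorem zetak_add_zetak_neg {k : ℕ} (hk : 1 ≤ k) (d n : ℝ) :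
    zetak k (2 * d) n + zetak k (-2 * d) n
      = 2 * zetak k 0 n - 2 * etaSecondDiff (zetaCenter k n) d := by
  simp only [zetak_eq hk, etaSecondDiff]
  ring_nf

theorem zeta1_eq_zetak_one (m n : ℝ) : zeta1 m = zetak 1 m n := by
  norm_num [zeta1, zetak]

theorem zeta_add_zeta_neg {K : ℕ} (hK : 1 ≤ K) (c : ℕ → ℝ) (d n : ℝ) :
    zeta K c (2 * d, n) + zeta K c (-2 * d, n)
      = 2 * zeta K c (0, n) - 2 * ∑ k ∈ Icc 1 K, c k * etaSecondDiff (zetaCenter k n) d := by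
  have hsplit : ∀ g : ℕ → ℝ, ∑ k ∈ Icc 1 K, g k = g 1 + ∑ k ∈ Icc 2 K, g k := fun g => by
    rw [Icc_eq_cons_Ioc hK, sum_cons, ← Icc_add_one_left_eq_Ioc]
    rfl
  have h₁ := zetak_add_zetak_neg le_rfl d n
  have h₂ : ∑ k ∈ Icc 2 K, c k * zetak k (2 * d) n + ∑ k ∈ Icc 2 K, c k * zetak k (-2 * d) n
      = 2 * ∑ k ∈ Icc 2 K, c k * zetak k 0 n
        - 2 * ∑ k ∈ Icc 2 K, c k * etaSecondDiff (zetaCenter k n) d := by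
    rw [mul_sum, mul_sum, ← sum_add_distrib, ← sum_sub_distrib]
    refine sum_congr rfl fun k hk => ?_
    rw [← mul_add, zetak_add_zetak_neg (by grind)]
    ring
  simp only [zeta, hsplit, zeta1_eq_zetak_one _ n]
  linear_combination c 1 * h₁ + h₂

theorem sum_mul_inv_zetaCenter_nonneg_of_concaveOn {K : ℕ} (hK : 1 ≤ K) {c : ℕ → ℝ}
    {S : Set (ℝ × ℝ)} (hS : IsOpen S) (hconc : ConcaveOn ℝ S (zeta K c)) {n : ℝ} (hn : 0 ≤ n)
    (hnS : ((0 : ℝ), n) ∈ S) :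
    0 ≤ ∑ k ∈ Icc 1 K, c k * (zetaCenter k n)⁻¹ := by
  have hmem : ∀ s : ℝ, ∀ᶠ d in 𝓝[>] (0 : ℝ), (s * d, n) ∈ S := fun s =>
    nhdsWithin_le_nhds <| (by fun_prop : Continuous fun d : ℝ => (s * d, n)).continuousAt
      |>.preimage_mem_nhds (by simpa using hS.mem_nhds hnS)
  have hlim : Tendsto (fun d => ∑ k ∈ Icc 1 K, c k * (etaSecondDiff (zetaCenter k n) d / d ^ 2))
      (𝓝[>] 0) (𝓝 (∑ k ∈ Icc 1 K, c k * (zetaCenter k n)⁻¹)) :=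
    tendsto_finsetSum _ fun k _ =>
      (tendsto_etaSecondDiff_div_sq (zetaCenter_pos k hn)).const_mul (c k)
  refine ge_of_tendsto hlim ?_
  filter_upwards [hmem 2, hmem (-2)] with d hplus hminus
  have hmid : midpoint ℝ (2 * d, n) (-2 * d, n) = ((0 : ℝ), n) := by
    simp [midpoint_eq_smul_add, ← two_mul]
  have h := hconc.add_le_two_mul_midpoint hplus hminus
  rw [hmid, zeta_add_zeta_neg hK] at h
  simp_rw [← mul_div_assoc, ← sum_div]
  exact div_nonneg (by linarith) (sq_nonneg d)

theorem tendsto_sum_mul_inv_zetaCenter_one (K : ℕ) (c : ℕ → ℝ) :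
    Tendsto (fun n => ∑ k ∈ Icc 1 K, c k * (zetaCenter k n)⁻¹) (𝓝 1)
      (𝓝 (∑ k ∈ Icc 1 K, c k * 2)) := by
  refine tendsto_finsetSum _ fun k hk => ?_
  have hcont : Continuous (zetaCenter k) := by unfold zetaCenter; fun_prop
  have h := (hcont.tendsto 1).inv₀ (by simp [zetaCenter_one (mem_Icc.1 hk).1])
  simpa [zetaCenter_one (mem_Icc.1 hk).1] using h.const_mul (c k)

/-- If `ζ(m,n) = c₁ ζ₁(m) + Σ_{k=2}^K c_k ζ_k(m,n)` is concave on an open neighborhood of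
the segment `{(0,n) : 0 ≤ n < 1}`, then `Σ_{k=1}^K c_k ≥ 0`. -/
theorem stmt19 (K : ℕ) (c : ℕ → ℝ) (S : Set (ℝ × ℝ)) (hopen : IsOpen S)
    (hseg : ∀ n : ℝ, 0 ≤ n → n < 1 → ((0 : ℝ), n) ∈ S)
    (hconc : ConcaveOn ℝ S
      (fun p => c 1 * zeta1 p.1 + ∑ k ∈ Finset.Icc 2 K, c k * zetak k p.1 p.2)) :
    0 ≤ ∑ k ∈ Finset.Icc 1 K, c k := by
  rcases Nat.eq_zero_or_pos K with rfl | hK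
  · simp
  have h : 0 ≤ (∑ k ∈ Icc 1 K, c k) * 2 := by
    rw [sum_mul]
    have hlim := (tendsto_sum_mul_inv_zetaCenter_one K c).mono_left
      (nhdsWithin_le_nhds (s := Set.Iio 1))
    refine ge_of_tendsto hlim ?_
    filter_upwards [Ioo_mem_nhdsLT zero_lt_one] with n hn
    exact sum_mul_inv_zetaCenter_nonneg_of_concaveOn hK hopen hconc hn.1.le (hseg n hn.1.le hn.2)
  linarith

end
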